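/- Fix a voter i ∈ V. For distinct x,y ∈ C, let f_{x,y,i} be the voting method with f_{x,y,i}(P) = {x} if x P_i y and f_{x,y,i}(P) = {y} otherwise. If S is a set of voting methods containing f_{x,y,i} for every pair of distinct x,y ∈ C, then for every profile P, the pointed profile (P,i) does not witness safe weak-dominance manipulability for S (i.e., voter i cannot safely manipulate with S). -/
import Mathlib


open scoped Classical

noncomputable section

/-- A strict linear order (ranking) on the set of candidates. -/
structure Ranking (C : Type*) where
  rel : C → C → Prop
  isSTO : IsStrictTotalOrder C rel

/-- A profile assigns a ranking (strict linear order on candidates) to each voter. -/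
abbrev Profile (C V : Type*) := V → Ranking C

variable {C V : Type*}

/-- A voting method assigns a nonempty set of winners to each profile. -/
structure VotingMethod (C V : Type*) where
  winners : Profile C V → Finset C
  nonempty : ∀ P, (winners P).Nonempty

/-- `P'` differs from `P` only in voter `i`'s ranking. -/
def Differs (P P' : Profile C V) (i : V) : Prop :=
  ∀ j, j ≠ i → P' j = P j

/-- Weak dominance (non-strict). -/
def weakGE (r : Ranking C) (X Y : Finset C) : Prop :=
  ∀ x ∈ X, ∀ y ∈ Y, x = y ∨ r.rel x y

/-- Weak dominance (strict). -/
def weakGT (r : Ranking C) (X Y : Finset C) : Prop :=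
  weakGE r X Y ∧ ∃ x ∈ X, ∃ y ∈ Y, r.rel x y

/-- `x` is the `r`-maximal element of `X`. -/
def isMaxOf (r : Ranking C) (X : Finset C) (x : C) : Prop :=
  x ∈ X ∧ ∀ y ∈ X, y ≠ x → r.rel x y

/-- `x` is the `r`-minimal element of `X`. -/
def isMinOf (r : Ranking C) (X : Finset C) (x : C) : Prop :=
  x ∈ X ∧ ∀ y ∈ X, y ≠ x → r.rel y x

/-- Optimistic dominance (non-strict): the max of `X` equals or is above the max of `Y`. -/
def optGE (r : Ranking C) (X Y : Finset C) : Prop :=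
  ∃ x y, isMaxOf r X x ∧ isMaxOf r Y y ∧ (x = y ∨ r.rel x y)

/-- Optimistic dominance (strict). -/
def optGT (r : Ranking C) (X Y : Finset C) : Prop :=
  ∃ x y, isMaxOf r X x ∧ isMaxOf r Y y ∧ r.rel x y

/-- Pessimistic dominance (non-strict): the min of `X` equals or is above the min of `Y`. -/
def pesGE (r : Ranking C) (X Y : Finset C) : Prop :=
  ∃ x y, isMinOf r X x ∧ isMinOf r Y y ∧ (x = y ∨ r.rel x y)

/-- Pessimistic dominance (strict). -/
def pesGT (r : Ranking C) (X Y : Finset C) : Prop :=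
  ∃ x y, isMinOf r X x ∧ isMinOf r Y y ∧ r.rel x y

/-- The three dominance notions: weak, optimistic, pessimistic. -/
inductive DomNotion | weak | opt | pes

/-- Non-strict version of a dominance notion. -/
def domGE : DomNotion → Ranking C → Finset C → Finset C → Prop
  | .weak => weakGE
  | .opt => optGE
  | .pes => pesGE

/-- Strict version of a dominance notion. -/
def domGT : DomNotion → Ranking C → Finset C → Finset C → Prop
  | .weak => weakGT
  | .opt => optGT
  | .pes => pesGT

/-- `(P,i)` witnesses safe Δ-manipulability for `S` by transitioning to `P'`. -/
def SafeWitnessTo (Δ : DomNotion) (S : Set (VotingMethod C V))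
    (P P' : Profile C V) (i : V) : Prop :=
  Differs P P' i ∧ (∀ f ∈ S, domGE Δ (P i) (f.winners P') (f.winners P)) ∧
    ∃ f ∈ S, domGT Δ (P i) (f.winners P') (f.winners P)

/-- `(P,i)` witnesses harmless Δ-manipulability for `S` by transitioning to `P'`. -/
def HarmlessWitnessTo (Δ : DomNotion) (S : Set (VotingMethod C V))
    (P P' : Profile C V) (i : V) : Prop :=
  Differs P P' i ∧ (∀ f ∈ S, ¬ domGT Δ (P i) (f.winners P) (f.winners P')) ∧
    ∃ f ∈ S, domGT Δ (P i) (f.winners P') (f.winners P)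

/-- `(P,i)` witnesses expected Δ-manipulability (uniform lottery on the finite set `S`)
by transitioning to `P'`: more methods lead to a strictly better outcome than to a
strictly worse one. -/
def ExpectedWitnessTo (Δ : DomNotion) (S : Finset (VotingMethod C V))
    (P P' : Profile C V) (i : V) : Prop :=
  Differs P P' i ∧
    (S.filter fun f => domGT Δ (P i) (f.winners P) (f.winners P')).card <
      (S.filter fun f => domGT Δ (P i) (f.winners P') (f.winners P)).card

/-- `(P,i)` witnesses expected Δ-manipulability (uniform lottery on `S`). -/
def ExpectedWitness (Δ : DomNotion) (S : Finset (VotingMethod C V))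
    (P : Profile C V) (i : V) : Prop :=
  ∃ P', ExpectedWitnessTo Δ S P P' i

/-- The voting method `f_{x,y,i}` selecting whichever of `x` and `y` is ranked higher by `i`. -/
def pairMethod (i : V) (x y : C) : VotingMethod C V where
  winners Q := if (Q i).rel x y then {x} else {y}
  nonempty Q := by
    by_cases h : (Q i).rel x y
    · simp [h]
    · simp [h]

/-- The probabilistic social choice function associated with an uncertainty set `S`:
each method in `S` is equally likely, and ties are broken uniformly at random. -/
def FS (S : Finset (VotingMethod C V)) (P : Profile C V) (x : C) : ℝ :=
  (S.card : ℝ)⁻¹ * ∑ f ∈ S.filter (fun f => x ∈ f.winners P), ((f.winners P).card : ℝ)⁻¹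

/-- `μ` stochastically dominates `ν` (non-strictly) relative to the ranking `r`. -/
def stochGE [Fintype C] (r : Ranking C) (μ ν : C → ℝ) : Prop :=
  ∀ x : C, ∑ y ∈ Finset.univ.filter (fun y => y = x ∨ r.rel y x), ν y ≤
      ∑ y ∈ Finset.univ.filter (fun y => y = x ∨ r.rel y x), μ y


theorem Ranking.ext' {C : Type*} {r s : Ranking C} (h : r.rel = s.rel) : r = s := by
  cases r; cases s; cases h; rfl

/-- If `S` contains the method `f_{x,y,i}` for every pair of distinct candidates
`x,y`, then voter `i` cannot safely manipulate with `S`. -/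
theorem stmt16 (C V : Type) [Fintype C] (h2 : 2 ≤ Fintype.card C) (i : V)
    (S : Set (VotingMethod C V))
    (hS : ∀ x y : C, x ≠ y → pairMethod i x y ∈ S)
    (P : Profile C V) :
    ¬ ∃ P', SafeWitnessTo DomNotion.weak S P P' i := by
  rintro ⟨P', hdiff, hGE, f, hfS, hGT⟩
  haveI h1 := (P i).isSTO
  haveI h2 := (P' i).isSTO
  have key : ∀ x y : C, (P i).rel x y → (P' i).rel x y := by
    intro x y hxy
    have hne : x ≠ y := fun h => irrefl_of (P i).rel x (h ▸ hxy)
    have hge := hGE _ (hS x y hne)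
    simp only [domGE, pairMethod] at hge
    rw [if_pos hxy] at hge
    by_contra hnot
    rw [if_neg hnot] at hge
    rcases hge y (Finset.mem_singleton_self y) x (Finset.mem_singleton_self x) with h | h
    · exact hne h.symm
    · exact irrefl_of (P i).rel x (trans_of (P i).rel hxy h)
  have releq : (P' i).rel = (P i).rel := by
    funext x y; apply propext
    constructor
    · intro h
      rcases trichotomous_of (P i).rel x y with h1 | h1 | h1
      · exact h1
      · subst h1; exact absurd h (irrefl_of (P' i).rel x)
      · exact absurd h (asymm_of (P' i).rel (key y x h1))
    · exact key x y
  have hPP : P' = P := by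
    funext j
    by_cases hj : j = i
    · subst hj; exact Ranking.ext' releq
    · exact hdiff j hj
  rw [hPP] at hGT
  obtain ⟨hge, x, hx, y, hy, hxy⟩ := hGT
  rcases hge y hy x hx with h | h
  · exact irrefl_of (P i).rel x (h ▸ hxy)
  · exact irrefl_of (P i).rel x (trans_of (P i).rel hxy h)

end
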